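/- Let 1 ≤ p < ∞ and let f : 𝔻 → ℂ be analytic on the open unit disk. Then the function r ↦ (∫_𝕋 |f(rξ)|^p dm(ξ))^{1/p} is nondecreasing on [0,1), where m is normalized Lebesgue measure on the unit circle. -/

import Mathlib

/-!
Fix `r < R < 1`. For `|w| < R`, the Poisson formula writes `f w` as the average of `f` over the
circle of radius `R` against the probability density `P_w = poissonKernel 0 w`; Jensen's
inequality for `t ↦ t ^ p` then bounds `‖f w‖ ^ p` by the Poisson integral `u w` of `‖f‖ ^ p`.
The function `u` is the real part of the holomorphic Herglotz–Riesz integral, so by the mean value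
property its average over the circle of radius `r` is `u 0`, the average of `‖f‖ ^ p` over the
circle of radius `R`.
-/

open Real Complex Metric Set

theorem CircleIntegrable.ofReal {g : ℂ → ℝ} {c : ℂ} {R : ℝ} (hg : CircleIntegrable g c R) :
    CircleIntegrable (fun z ↦ (g z : ℂ)) c R := by
  simp only [CircleIntegrable, intervalIntegrable_iff] at hg ⊢
  exact ofRealCLM.integrable_comp hg

theorem Real.norm_circleAverage_le {E : Type*} [NormedAddCommGroup E] [NormedSpace ℝ E]
    {f : ℂ → E} {c : ℂ} {R : ℝ} :
    ‖circleAverage f c R‖ ≤ circleAverage (fun z ↦ ‖f z‖) c R := by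
  rw [circleAverage_def, circleAverage_def, norm_smul, smul_eq_mul,
    Real.norm_of_nonneg (by positivity)]
  gcongr
  exact intervalIntegral.norm_integral_le_integral_norm two_pi_pos.le

theorem Real.rpow_add_mul_rpow_sub_one_mul_sub_le {a y p : ℝ} (ha : 0 < a) (hy : 0 ≤ y)
    (hp : 1 ≤ p) : a ^ p + p * a ^ (p - 1) * (y - a) ≤ y ^ p := by
  have h := one_add_mul_self_le_rpow_one_add (s := y / a - 1)
    (by linarith [div_nonneg hy ha.le]) hp
  rw [add_sub_cancel, div_rpow hy ha.le, le_div_iff₀ (rpow_pos_of_pos ha p)] at h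
  have hpow : a ^ p = a ^ (p - 1) * a := by rw [rpow_sub_one ha.ne', div_mul_cancel₀ _ ha.ne']
  calc a ^ p + p * a ^ (p - 1) * (y - a) = (1 + p * (y / a - 1)) * a ^ p := by
        rw [hpow]; field_simp
    _ ≤ y ^ p := h

theorem Real.rpow_circleAverage_mul_le {c : ℂ} {R p : ℝ} {w x : ℂ → ℝ} (hp : 1 ≤ p)
    (hw : ContinuousOn w (sphere c |R|)) (hx : ContinuousOn x (sphere c |R|))
    (hw₀ : ∀ z ∈ sphere c |R|, 0 ≤ w z) (hx₀ : ∀ z ∈ sphere c |R|, 0 ≤ x z)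
    (hw₁ : circleAverage w c R = 1) :
    circleAverage (fun z ↦ w z * x z) c R ^ p ≤ circleAverage (fun z ↦ w z * x z ^ p) c R := by
  set a := circleAverage (fun z ↦ w z * x z) c R
  have ha₀ : 0 ≤ a :=
    circleAverage_nonneg_of_nonneg fun z hz ↦ mul_nonneg (hw₀ z hz) (hx₀ z hz)
  rcases ha₀.eq_or_lt with ha | ha
  · rw [← ha, zero_rpow (by linarith)]
    exact circleAverage_nonneg_of_nonneg fun z hz ↦
      mul_nonneg (hw₀ z hz) (rpow_nonneg (hx₀ z hz) p)
  -- integrate the tangent line of `t ↦ t ^ p` at `a` against the density `w`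
  calc a ^ p = circleAverage
        (fun z ↦ a ^ p • w z + (p * a ^ (p - 1)) • (w z * x z - a • w z)) c R := by
        rw [circleAverage_fun_add, circleAverage_fun_smul, circleAverage_fun_smul,
          circleAverage_fun_sub, circleAverage_fun_smul, hw₁]
        · simp only [smul_eq_mul]; ring
        all_goals fun_prop
    _ ≤ circleAverage (fun z ↦ w z * x z ^ p) c R := by
        apply circleAverage_mono
        · fun_prop
        · exact (hw.mul (hx.rpow_const fun _ _ ↦ Or.inr (by linarith))).circleIntegrable'
        intro z hz
        have := mul_le_mul_of_nonneg_left
          (rpow_add_mul_rpow_sub_one_mul_sub_le ha (hx₀ z hz) hp) (hw₀ z hz)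
        simp only [smul_eq_mul]
        linarith

section PoissonKernel

variable {c w : ℂ} {R : ℝ}

theorem poissonKernel_nonneg (hw : w ∈ ball c R) {z : ℂ} (hz : z ∈ sphere c R) :
    0 ≤ poissonKernel c w z := by
  have hwz : ‖w - c‖ ≤ ‖z - c‖ := by
    rw [← dist_eq_norm, ← dist_eq_norm, mem_sphere.1 hz]
    exact (mem_ball.1 hw).le
  have := norm_nonneg (w - c)
  exact div_nonneg (by nlinarith) (by positivity)

theorem continuousOn_poissonKernel_sphere (hw : w ∈ ball c R) :
    ContinuousOn (poissonKernel c w) (sphere c |R|) := by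
  rw [poissonKernel_eq_re_herglotzRieszKernel]
  exact continuous_re.comp_continuousOn (continuousOn_herglotzRieszKernel_sphere hw)

theorem circleAverage_poissonKernel (hw : w ∈ ball c R) :
    circleAverage (poissonKernel c w) c R = 1 := by
  simpa [Pi.mul_def] using InnerProductSpace.HarmonicContOnCl.circleAverage_poissonKernel_smul
    (InnerProductSpace.harmonicContOnCl_const (c := (1 : ℝ))) hw

end PoissonKernel

noncomputable def poissonIntegral (g : ℂ → ℝ) (R : ℝ) (w : ℂ) : ℝ :=
  circleAverage (poissonKernel 0 w • g) 0 R

section PoissonIntegral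

variable {g : ℂ → ℝ} {R : ℝ}

theorem eqOn_poissonIntegral_re (hg : CircleIntegrable g 0 R) :
    EqOn (poissonIntegral g R)
      (fun w ↦ (circleAverage (fun ζ ↦ herglotzRieszKernel 0 w ζ • (g ζ : ℂ)) 0 R).re)
      (ball 0 R) := fun w hw ↦ by
  dsimp only
  rw [re_circleAverage_herglotzRieszKernel_smul hg hw, poissonIntegral,
    poissonKernel_eq_re_herglotzRieszKernel]

theorem continuousOn_poissonIntegral (hg : CircleIntegrable g 0 R) :
    ContinuousOn (poissonIntegral g R) (ball 0 R) :=
  (continuous_re.comp_continuousOn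
    (differentiableOn_circleAverage_herglotzRieszKernel_smul hg.ofReal).continuousOn).congr
    (eqOn_poissonIntegral_re hg)

theorem poissonIntegral_zero (hR : 0 < R) : poissonIntegral g R 0 = circleAverage g 0 R := by
  refine circleAverage_congr_sphere fun z hz ↦ ?_
  have hz : z ≠ 0 := ne_of_mem_sphere hz (by positivity)
  simp [poissonKernel_def, hz]

theorem circleAverage_poissonIntegral (hg : CircleIntegrable g 0 R) {r : ℝ} (hr : 0 ≤ r)
    (hrR : r < R) : circleAverage (poissonIntegral g R) 0 r = circleAverage g 0 R := by
  set F := fun w ↦ circleAverage (fun ζ ↦ herglotzRieszKernel 0 w ζ • (g ζ : ℂ)) 0 R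
  have hF : DifferentiableOn ℂ F (ball 0 R) :=
    differentiableOn_circleAverage_herglotzRieszKernel_smul hg.ofReal
  have hR : 0 < R := hr.trans_lt hrR
  have hsphere : sphere (0 : ℂ) |r| ⊆ ball 0 R := by
    rw [abs_of_nonneg hr]; exact sphere_subset_ball hrR
  have hclosedBall : closedBall (0 : ℂ) |r| ⊆ ball 0 R := by
    rw [abs_of_nonneg hr]; exact closedBall_subset_ball hrR
  calc circleAverage (poissonIntegral g R) 0 r = circleAverage (reCLM ∘ F) 0 r :=
        circleAverage_congr_sphere ((eqOn_poissonIntegral_re hg).mono hsphere)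
    _ = (F 0).re := by
        rw [reCLM.circleAverage_comp_comm (hF.continuousOn.mono hsphere).circleIntegrable',
          (hF.diffContOnCl_ball hclosedBall).circleAverage, reCLM_apply]
    _ = circleAverage g 0 R :=
        (eqOn_poissonIntegral_re hg (mem_ball_self hR)).symm.trans (poissonIntegral_zero hR)

end PoissonIntegral

section NormRpow

variable {E : Type*} [NormedAddCommGroup E] [NormedSpace ℂ E] [CompleteSpace E] {f : ℂ → E}
  {R p : ℝ}

theorem norm_rpow_le_poissonIntegral {w : ℂ} (hf : DiffContOnCl ℂ f (ball 0 R))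
    (hw : w ∈ ball 0 R) (hp : 1 ≤ p) :
    ‖f w‖ ^ p ≤ poissonIntegral (fun z ↦ ‖f z‖ ^ p) R w := by
  have hR : 0 < R := pos_of_mem_ball hw
  have hsphere : sphere (0 : ℂ) |R| ⊆ closure (ball 0 R) := by
    rw [abs_of_pos hR, closure_ball 0 hR.ne']
    exact sphere_subset_closedBall
  have hP₀ : ∀ z ∈ sphere (0 : ℂ) |R|, 0 ≤ poissonKernel 0 w z :=
    fun z hz ↦ poissonKernel_nonneg hw (abs_of_pos hR ▸ hz)
  calc ‖f w‖ ^ p = ‖circleAverage (poissonKernel 0 w • f) 0 R‖ ^ p := by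
        rw [hf.circleAverage_poissonKernel_smul hw]
    _ ≤ circleAverage (fun z ↦ poissonKernel 0 w z * ‖f z‖) 0 R ^ p := by
        gcongr
        refine norm_circleAverage_le.trans_eq (circleAverage_congr_sphere fun z hz ↦ ?_)
        simp [norm_smul, abs_of_nonneg (hP₀ z hz)]
    _ ≤ circleAverage (fun z ↦ poissonKernel 0 w z * ‖f z‖ ^ p) 0 R :=
        rpow_circleAverage_mul_le hp (continuousOn_poissonKernel_sphere hw)
          (hf.continuousOn.mono hsphere).norm hP₀ (fun _ _ ↦ norm_nonneg _)
          (circleAverage_poissonKernel hw)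

theorem circleAverage_norm_rpow_le_of_le {r : ℝ} (hf : DiffContOnCl ℂ f (ball 0 R)) (hp : 1 ≤ p)
    (hr : 0 ≤ r) (hrR : r ≤ R) :
    circleAverage (fun z ↦ ‖f z‖ ^ p) 0 r ≤ circleAverage (fun z ↦ ‖f z‖ ^ p) 0 R := by
  rcases hrR.eq_or_lt with rfl | hrR
  · rfl
  have hR : 0 < R := hr.trans_lt hrR
  have hg : ContinuousOn (fun z ↦ ‖f z‖ ^ p) (closedBall 0 R) := by
    rw [← closure_ball 0 hR.ne']
    exact hf.continuousOn.norm.rpow_const fun _ _ ↦ Or.inr (by linarith)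
  have hgR : CircleIntegrable (fun z ↦ ‖f z‖ ^ p) 0 R :=
    (hg.mono sphere_subset_closedBall).circleIntegrable hR.le
  have hsphere : sphere (0 : ℂ) |r| ⊆ ball 0 R := by
    rw [abs_of_nonneg hr]; exact sphere_subset_ball hrR
  calc circleAverage (fun z ↦ ‖f z‖ ^ p) 0 r
      ≤ circleAverage (poissonIntegral (fun z ↦ ‖f z‖ ^ p) R) 0 r :=
        circleAverage_mono (hg.mono (hsphere.trans ball_subset_closedBall)).circleIntegrable'
          ((continuousOn_poissonIntegral hgR).mono hsphere).circleIntegrable'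
          fun w hw ↦ norm_rpow_le_poissonIntegral hf (hsphere hw) hp
    _ = circleAverage (fun z ↦ ‖f z‖ ^ p) 0 R := circleAverage_poissonIntegral hgR hr hrR

end NormRpow

/-- For `f` analytic on the unit disk and `1 ≤ p < ∞`, the integral means
`r ↦ (∫_𝕋 |f(rξ)|^p dm(ξ))^{1/p}` are nondecreasing in `r ∈ [0,1)`. -/
theorem integral_means_monotone (f : ℂ → ℂ) (hf : DifferentiableOn ℂ f (Metric.ball 0 1))
    (p : ℝ) (hp : 1 ≤ p) :
    ∀ r₁ r₂ : ℝ, 0 ≤ r₁ → r₁ ≤ r₂ → r₂ < 1 →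
      ((2 * π)⁻¹ *
          ∫ θ in (0 : ℝ)..(2 * π), ‖f (r₁ * Complex.exp (θ * Complex.I))‖ ^ p) ^ p⁻¹
        ≤ ((2 * π)⁻¹ *
          ∫ θ in (0 : ℝ)..(2 * π), ‖f (r₂ * Complex.exp (θ * Complex.I))‖ ^ p) ^ p⁻¹ := by
  intro r₁ r₂ h₁ h₁₂ h₂
  have hmono := circleAverage_norm_rpow_le_of_le
    (hf.diffContOnCl_ball (closedBall_subset_ball h₂)) hp h₁ h₁₂
  have hnonneg : 0 ≤ circleAverage (fun z ↦ ‖f z‖ ^ p) 0 r₁ :=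
    circleAverage_nonneg_of_nonneg fun _ _ ↦ by positivity
  simpa [circleAverage_def, circleMap] using
    rpow_le_rpow hnonneg hmono (inv_nonneg.2 (by linarith : (0 : ℝ) ≤ p))
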